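/- Let X ⊆ ℝⁿ be a nonempty convex compact set with κ = max_{x∈X} ‖x‖₂ > 0, C = cone({κ} × X) ⊆ ℝ^{n+1} and C° its polar cone. Let positive payoff weights (ω_t) and positive decision weights (θ_t) satisfy θ_{t+1}/θ_t ≥ ω_{t+1}/ω_t for all t ≥ 1. Let f_t ∈ ℝⁿ and x_t ∈ X for t = 1,…,T, set v_t = (⟨f_t, x_t⟩/κ, −f_t), and define the CBA⁺ iterates u_0 = 0 and u_t = π_C(u_{t−1} + ω_t v_t). Then ∑_{t=1}^T θ_t v_t − (θ_T/ω_T) u_T ∈ C°, i.e., ∑_{t=1}^T θ_t v_t ≥_{C°} (θ_T/ω_T) u_T in the partial order induced by C°. -/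

import Mathlib

/-!
Write `ρ_t = θ_t / ω_t` and `S_t = ∑_{s ≤ t} θ_s v_s − ρ_t u_t`. Then
`S_{t+1} = S_t + ρ_{t+1} (y_{t+1} − u_{t+1}) + (ρ_{t+1} − ρ_t) (−u_t)` with
`y_{t+1} = u_t + ω_{t+1} v_{t+1}`. The residual `y − π_C(y)` of a projection onto a convex cone
lies in `C°`, and `−C ⊆ C°` because any two points `α (κ, p)`, `β (κ, q)` of `C` have inner
product `αβ (κ² + ⟪p, q⟫) ≥ 0` when `‖p‖, ‖q‖ ≤ κ`. The weight condition says exactly that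
`ρ` is nondecreasing, so all three summands lie in the convex cone `C°`.
-/

set_option autoImplicit false

open scoped RealInnerProductSpace
open Finset

noncomputable section

/-- The lifted vector `(t, y) ∈ ℝ × ℝⁿ = ℝ^{n+1}`. -/
def pr {n : ℕ} (t : ℝ) (y : EuclideanSpace ℝ (Fin n)) :
    EuclideanSpace ℝ (Fin (n + 1)) :=
  WithLp.toLp 2 (Fin.cons t (fun i => y i) : Fin (n + 1) → ℝ)

/-- The conic hull `cone({κ} × X) = {α • (κ, x) : α ≥ 0, x ∈ X}`. -/
def coneLift {n : ℕ} (κ : ℝ) (X : Set (EuclideanSpace ℝ (Fin n))) :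
    Set (EuclideanSpace ℝ (Fin (n + 1))) :=
  {u | ∃ α : ℝ, 0 ≤ α ∧ ∃ x ∈ X, u = α • pr κ x}

/-- The polar cone `C° = {z : ⟨z, w⟩ ≤ 0 ∀ w ∈ C}`. -/
def polarCone {E : Type*} [NormedAddCommGroup E] [InnerProductSpace ℝ E]
    (C : Set E) : Set E :=
  {z | ∀ w ∈ C, ⟪z, w⟫ ≤ 0}

/-- `p` is the Euclidean orthogonal projection of `u` onto the set `S`. -/
def IsProjOn {E : Type*} [NormedAddCommGroup E] [InnerProductSpace ℝ E]
    (u : E) (S : Set E) (p : E) : Prop :=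
  p ∈ S ∧ ∀ z ∈ S, dist u p ≤ dist u z

lemma div_le_div_of_div_le_div {a b c d : ℝ} (ha : 0 < a) (hb : 0 < b) (hc : 0 < c)
    (h : c / a ≤ d / b) : b / a ≤ d / c := by
  rw [div_le_div_iff₀ ha hb] at h
  rw [div_le_div_iff₀ ha hc]
  linarith [mul_comm b c]

section PolarCone

variable {E : Type*} [NormedAddCommGroup E] [InnerProductSpace ℝ E]

lemma add_mem_polarCone {C : Set E} {a b : E} (ha : a ∈ polarCone C) (hb : b ∈ polarCone C) :
    a + b ∈ polarCone C := fun w hw => by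
  rw [inner_add_left]
  linarith [ha w hw, hb w hw]

lemma smul_mem_polarCone {C : Set E} {a : E} {c : ℝ} (hc : 0 ≤ c) (ha : a ∈ polarCone C) :
    c • a ∈ polarCone C := fun w hw => by
  rw [real_inner_smul_left]
  exact mul_nonpos_of_nonneg_of_nonpos hc (ha w hw)

lemma neg_mem_polarCone {C : Set E} (hC : ∀ a ∈ C, ∀ b ∈ C, 0 ≤ ⟪a, b⟫) {a : E} (ha : a ∈ C) :
    -a ∈ polarCone C := fun w hw => by
  rw [inner_neg_left, neg_nonpos]
  exact hC a ha w hw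

lemma IsProjOn.inner_sub_le_zero {K : Set E} (hK : Convex ℝ K) {y p : E} (hp : IsProjOn y K p) :
    ∀ w ∈ K, ⟪y - p, w - p⟫ ≤ 0 := by
  have : Nonempty K := ⟨⟨p, hp.1⟩⟩
  refine (norm_eq_iInf_iff_real_inner_le_zero hK hp.1).1 (le_antisymm ?_ ?_)
  · exact le_ciInf fun w => by simpa only [dist_eq_norm] using hp.2 w w.2
  · exact ciInf_le ⟨0, Set.forall_mem_range.2 fun w : K => norm_nonneg (y - w)⟩ (⟨p, hp.1⟩ : K)

lemma IsProjOn.sub_mem_polarCone {C : ConvexCone ℝ E} {y p : E} (hp : IsProjOn y C p) :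
    y - p ∈ polarCone (C : Set E) := fun w hw => by
  simpa using hp.inner_sub_le_zero C.convex (p + w) (C.add_mem hp.1 hw)

theorem sum_smul_sub_smul_iterate_mem_polarCone (C : ConvexCone ℝ E) (hC : ∀ a ∈ C, ∀ b ∈ C, 0 ≤ ⟪a, b⟫)
    (ω θ : ℕ → ℝ) (hω : ∀ t ≥ 1, 0 < ω t) (hθ : ∀ t ≥ 1, 0 < θ t)
    (hrat : ∀ t ≥ 1, ω (t + 1) / ω t ≤ θ (t + 1) / θ t) (T : ℕ) (hT : 1 ≤ T) (v u : ℕ → E)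
    (hu0 : u 0 = 0) (hu : ∀ t ∈ Icc 1 T, IsProjOn (u (t - 1) + ω t • v t) C (u t)) :
    (∑ t ∈ Icc 1 T, θ t • v t) - (θ T / ω T) • u T ∈ polarCone (C : Set E) := by
  have hρ : ∀ t ≥ 1, 0 ≤ θ t / ω t := fun t ht => (div_pos (hθ t ht) (hω t ht)).le
  induction T, hT using Nat.le_induction with
  | base =>
    have hres := (hu 1 (by simp)).sub_mem_polarCone
    rw [Nat.sub_self, hu0, zero_add] at hres
    have hsplit : (∑ t ∈ Icc 1 1, θ t • v t) - (θ 1 / ω 1) • u 1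
        = (θ 1 / ω 1) • (ω 1 • v 1 - u 1) := by
      rw [Icc_self, sum_singleton, smul_sub, smul_smul, div_mul_cancel₀ _ (hω 1 le_rfl).ne']
    rw [hsplit]
    exact smul_mem_polarCone (hρ 1 le_rfl) hres
  | succ T hT ih =>
    have hω' : ω (T + 1) ≠ 0 := (hω (T + 1) (by omega)).ne'
    have hmono : θ T / ω T ≤ θ (T + 1) / ω (T + 1) :=
      div_le_div_of_div_le_div (hω T hT) (hθ T hT) (hω (T + 1) (by omega)) (hrat T hT)
    have hu' : ∀ t ∈ Icc 1 T, IsProjOn (u (t - 1) + ω t • v t) C (u t) := fun t ht =>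
      hu t (Icc_subset_Icc_right T.le_succ ht)
    have hres := (hu (T + 1) (by simp)).sub_mem_polarCone
    rw [Nat.add_sub_cancel] at hres
    have hneg := neg_mem_polarCone hC (hu' T (by simp [hT])).1
    have hsplit : (∑ t ∈ Icc 1 (T + 1), θ t • v t) - (θ (T + 1) / ω (T + 1)) • u (T + 1)
        = ((∑ t ∈ Icc 1 T, θ t • v t) - (θ T / ω T) • u T)
          + (θ (T + 1) / ω (T + 1)) • (u T + ω (T + 1) • v (T + 1) - u (T + 1))
          + (θ (T + 1) / ω (T + 1) - θ T / ω T) • -u T := by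
      rw [sum_Icc_succ_top (by omega), smul_sub, smul_add, smul_smul, div_mul_cancel₀ _ hω']
      module
    rw [hsplit]
    exact add_mem_polarCone (add_mem_polarCone (ih hu')
      (smul_mem_polarCone (hρ (T + 1) (by omega)) hres)) (smul_mem_polarCone (by linarith) hneg)

end PolarCone

section ConeLift

variable {n : ℕ}

lemma smul_pr (c t : ℝ) (y : EuclideanSpace ℝ (Fin n)) : c • pr t y = pr (c * t) (c • y) := by
  ext i
  refine Fin.cases ?_ (fun j => ?_) i <;> simp [pr]

lemma pr_add (s t : ℝ) (y z : EuclideanSpace ℝ (Fin n)) :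
    pr s y + pr t z = pr (s + t) (y + z) := by
  ext i
  refine Fin.cases ?_ (fun j => ?_) i <;> simp [pr]

lemma inner_pr (s t : ℝ) (y z : EuclideanSpace ℝ (Fin n)) :
    ⟪pr s y, pr t z⟫ = s * t + ⟪y, z⟫ := by
  simp [pr, PiLp.inner_apply, RCLike.inner_apply, Fin.sum_univ_succ, mul_comm]

lemma add_mem_coneLift {κ : ℝ} {X : Set (EuclideanSpace ℝ (Fin n))} (hX : Convex ℝ X)
    {a b : EuclideanSpace ℝ (Fin (n + 1))} (ha : a ∈ coneLift κ X) (hb : b ∈ coneLift κ X) :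
    a + b ∈ coneLift κ X := by
  obtain ⟨α, hα, p, hp, rfl⟩ := ha
  obtain ⟨β, hβ, q, hq, rfl⟩ := hb
  rcases (add_nonneg hα hβ).eq_or_lt with hsum | hsum
  · obtain ⟨rfl, rfl⟩ : α = 0 ∧ β = 0 := ⟨by linarith, by linarith⟩
    exact ⟨0, le_rfl, p, hp, by simp⟩
  · refine ⟨α + β, hsum.le, (α / (α + β)) • p + (β / (α + β)) • q,
      hX hp hq (by positivity) (by positivity) (by field_simp), ?_⟩
    rw [smul_pr, smul_pr, smul_pr, pr_add, smul_add, smul_smul, smul_smul,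
      mul_div_cancel₀ _ hsum.ne', mul_div_cancel₀ _ hsum.ne', add_mul]

def coneLiftConvexCone (κ : ℝ) {X : Set (EuclideanSpace ℝ (Fin n))} (hX : Convex ℝ X) :
    ConvexCone ℝ (EuclideanSpace ℝ (Fin (n + 1))) where
  carrier := coneLift κ X
  smul_mem' := by
    rintro c hc _ ⟨α, hα, p, hp, rfl⟩
    exact ⟨c * α, mul_nonneg hc.le hα, p, hp, smul_smul c α _⟩
  add_mem' _ ha _ hb := add_mem_coneLift hX ha hb

lemma inner_nonneg_of_mem_coneLift {κ : ℝ} {X : Set (EuclideanSpace ℝ (Fin n))}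
    (hκ : ∀ x ∈ X, ‖x‖ ≤ κ) {a b : EuclideanSpace ℝ (Fin (n + 1))}
    (ha : a ∈ coneLift κ X) (hb : b ∈ coneLift κ X) : 0 ≤ ⟪a, b⟫ := by
  obtain ⟨α, hα, p, hp, rfl⟩ := ha
  obtain ⟨β, hβ, q, hq, rfl⟩ := hb
  rw [real_inner_smul_left, real_inner_smul_right, inner_pr]
  have hnorm : ‖p‖ * ‖q‖ ≤ κ * κ :=
    mul_le_mul (hκ p hp) (hκ q hq) (norm_nonneg q) ((norm_nonneg p).trans (hκ p hp))
  have hinner : -(‖p‖ * ‖q‖) ≤ ⟪p, q⟫ := neg_le_of_abs_le (abs_real_inner_le_norm p q)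
  have : 0 ≤ κ * κ + ⟪p, q⟫ := by linarith
  positivity

end ConeLift

theorem stmt6_general {n : ℕ} (X : Set (EuclideanSpace ℝ (Fin n)))
    (hXcv : Convex ℝ X)
    (κ : ℝ) (hκ : IsGreatest ((fun x => ‖x‖) '' X) κ)
    (ω θ : ℕ → ℝ) (hω : ∀ t ≥ 1, 0 < ω t) (hθ : ∀ t ≥ 1, 0 < θ t)
    (hrat : ∀ t ≥ 1, ω (t + 1) / ω t ≤ θ (t + 1) / θ t)
    (T : ℕ) (hT : 1 ≤ T)
    (x : ℕ → EuclideanSpace ℝ (Fin n))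
    (v : ℕ → EuclideanSpace ℝ (Fin (n + 1)))
    (u : ℕ → EuclideanSpace ℝ (Fin (n + 1))) (hu0 : u 0 = 0)
    (hu : ∀ t ∈ Icc 1 T, IsProjOn (u (t - 1) + ω t • v t) (coneLift κ X) (u t)) :
    (∑ t ∈ Icc 1 T, θ t • v t) - (θ T / ω T) • u T ∈ polarCone (coneLift κ X) :=
  sum_smul_sub_smul_iterate_mem_polarCone (coneLiftConvexCone κ hXcv)
    (fun _ ha _ hb => inner_nonneg_of_mem_coneLift (fun x hx => hκ.2 ⟨x, hx, rfl⟩) ha hb)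
    ω θ hω hθ hrat T hT v u hu0 hu

/-- key step of Theorem 3: for CBA⁺ iterates
`u_t = π_C(u_{t-1} + ω_t v_t)` with payoff weights `ω` and decision weights `θ`
satisfying `θ_{t+1}/θ_t ≥ ω_{t+1}/ω_t`, one has
`∑ θ_t v_t − (θ_T/ω_T) u_T ∈ C°`, i.e. `∑ θ_t v_t ≥_{C°} (θ_T/ω_T) u_T`. -/
theorem stmt6 {n : ℕ} (X : Set (EuclideanSpace ℝ (Fin n)))
    (hXne : X.Nonempty) (hXcv : Convex ℝ X) (hXcp : IsCompact X)
    (κ : ℝ) (hκ : IsGreatest ((fun x => ‖x‖) '' X) κ) (hκpos : 0 < κ)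
    (ω θ : ℕ → ℝ) (hω : ∀ t ≥ 1, 0 < ω t) (hθ : ∀ t ≥ 1, 0 < θ t)
    (hrat : ∀ t ≥ 1, ω (t + 1) / ω t ≤ θ (t + 1) / θ t)
    (T : ℕ) (hT : 1 ≤ T)
    (f x : ℕ → EuclideanSpace ℝ (Fin n)) (hx : ∀ t ∈ Icc 1 T, x t ∈ X)
    (v : ℕ → EuclideanSpace ℝ (Fin (n + 1)))
    (hv : ∀ t, v t = pr (⟪f t, x t⟫ / κ) (-(f t)))
    (u : ℕ → EuclideanSpace ℝ (Fin (n + 1))) (hu0 : u 0 = 0)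
    (hu : ∀ t ∈ Icc 1 T, IsProjOn (u (t - 1) + ω t • v t) (coneLift κ X) (u t)) :
    (∑ t ∈ Icc 1 T, θ t • v t) - (θ T / ω T) • u T ∈ polarCone (coneLift κ X) :=
  stmt6_general X hXcv κ hκ ω θ hω hθ hrat T hT x v u hu0 hu

end
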